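/- arXiv:2303.16853 — 3 statements merged into one kernel-verified Lean document; each statement's English description precedes it below -/
import Mathlib

section
/- If N is a composite positive integer such that φ(N) divides N−1, then N is odd and squarefree. -/
theorem lehmer_odd_squarefree (N : ℕ) (hN : 1 < N) (hcomp : ¬ N.Prime)
    (hdvd : N.totient ∣ N - 1) : Odd N ∧ Squarefree N := by
  have hN2 : 2 < N := by
    rcases Nat.lt_or_ge N 3 with h | h
    · interval_cases N
      · exact absurd Nat.prime_two hcomp
    · omega
  constructor
  · rcases Nat.even_or_odd N with he | ho
    · exfalso
      have h1 : 2 ∣ N.totient := (Nat.totient_even hN2).two_dvd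
      have h2 : 2 ∣ N - 1 := h1.trans hdvd
      obtain ⟨k, hk⟩ := he
      omega
    · exact ho
  · rw [Nat.squarefree_iff_prime_squarefree]
    rintro p hp ⟨m, hm⟩
    have hptot : p ∣ N.totient := by
      have hNe : N = p * (p * m) := by rw [hm]; ring
      rw [hNe, Nat.totient_mul_of_prime_of_dvd hp (Dvd.intro m rfl)]
      exact Dvd.intro _ rfl
    have hp1 : p ∣ N - 1 := hptot.trans hdvd
    have hpN : p ∣ N := ⟨p * m, by rw [hm]; ring⟩
    have h1 : p ∣ 1 := by
      have := Nat.dvd_sub hpN hp1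
      rwa [Nat.sub_sub_self (by omega)] at this
    exact Nat.Prime.one_lt hp |>.ne' (Nat.dvd_one.mp h1)
end

section
/- Let f be a multiplicative arithmetic function taking nonnegative real values and let U be a set of primes such that ∑_{e ≥ 0} f(p^e) converges for each p ∈ U and the product ∏_{p ∈ U} ∑_{e ≥ 0} f(p^e) converges. Then for every real x ≥ 1, ∑_{n ≤ x, gcd(n, p) = 1 for all p ∈ U} f(n) ≥ (∑_{n ≤ x} f(n)) / ∏_{p ∈ U} ∑_{e ≥ 0} f(p^e). -/
/-!
Writing `n = p ^ e * m` with `p ∤ m` maps the integers in `[1, N]` coprime to `s` injectively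
into pairs `(e, m)` with `m ∈ [1, N]` coprime to `insert p s`; multiplicativity and nonnegativity
of `f` then give `∑_{n coprime to s} f n ≤ (∑_e f (p ^ e)) · ∑_{m coprime to insert p s} f m`.
Iterating over the primes of `U`, starting from `s = ∅`, bounds the full sum by the sieved sum
times `∏_{p ∈ U} ∑_e f (p ^ e)`.
-/

open Finset

def coprimeIcc (N : ℕ) (s : Finset ℕ) : Finset ℕ :=
  (Icc 1 N).filter fun n => ∀ q ∈ s, n.Coprime q

theorem mem_coprimeIcc {N n : ℕ} {s : Finset ℕ} :
    n ∈ coprimeIcc N s ↔ (1 ≤ n ∧ n ≤ N) ∧ ∀ q ∈ s, n.Coprime q := by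
  rw [coprimeIcc, mem_filter, mem_Icc]

theorem coprimeIcc_empty (N : ℕ) : coprimeIcc N ∅ = Icc 1 N := by
  simp [coprimeIcc]

theorem factorization_ordCompl_mem_coprimeIcc {N n p : ℕ} {s : Finset ℕ} (hp : p.Prime)
    (hn : n ∈ coprimeIcc N s) :
    (n.factorization p, ordCompl[p] n) ∈ range N ×ˢ coprimeIcc N (insert p s) := by
  obtain ⟨⟨hn1, hnN⟩, hcop⟩ := mem_coprimeIcc.mp hn
  have hn0 : n ≠ 0 := by omega
  refine mem_product.mpr ⟨mem_range.mpr ((Nat.factorization_lt p hn0).trans_le hnN),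
    mem_coprimeIcc.mpr ⟨⟨Nat.ordCompl_pos p hn0, (Nat.ordCompl_le n p).trans hnN⟩, ?_⟩⟩
  intro q hq
  rcases mem_insert.mp hq with rfl | hq
  · exact (Nat.coprime_ordCompl hp hn0).symm
  · exact (hcop q hq).coprime_dvd_left (Nat.ordCompl_dvd n p)

section Sieve

variable {R : Type*} [CommSemiring R] [PartialOrder R] [IsOrderedRing R] {f : ℕ → R}

theorem sum_coprimeIcc_le_mul_sum_coprimeIcc_insert
    (hfmul : ∀ m n : ℕ, m.Coprime n → f (m * n) = f m * f n) (hfnonneg : ∀ n, 0 ≤ f n)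
    {p : ℕ} (hp : p.Prime) (N : ℕ) (s : Finset ℕ) :
    ∑ n ∈ coprimeIcc N s, f n ≤
      (∑ e ∈ range N, f (p ^ e)) * ∑ m ∈ coprimeIcc N (insert p s), f m := by
  set split : ℕ → ℕ × ℕ := fun n => (n.factorization p, ordCompl[p] n)
  have hsplit : ∀ n, n = p ^ (split n).1 * (split n).2 :=
    fun n => (Nat.ordProj_mul_ordCompl_eq_self n p).symm
  have hf_split : ∀ n ∈ coprimeIcc N s, f n = f (p ^ (split n).1) * f (split n).2 := by
    intro n hn
    have hn0 : n ≠ 0 := by have := (mem_coprimeIcc.mp hn).1.1; omega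
    conv_lhs => rw [hsplit n]
    exact hfmul _ _ ((Nat.coprime_ordCompl hp hn0).pow_left _)
  have hinj : Set.InjOn split (coprimeIcc N s) := fun n _ m _ h => by
    rw [hsplit n, hsplit m, h]
  calc ∑ n ∈ coprimeIcc N s, f n
      = ∑ q ∈ (coprimeIcc N s).image split, f (p ^ q.1) * f q.2 := by
        rw [sum_image hinj]; exact sum_congr rfl hf_split
    _ ≤ ∑ q ∈ range N ×ˢ coprimeIcc N (insert p s), f (p ^ q.1) * f q.2 :=
        sum_le_sum_of_subset_of_nonneg
          (image_subset_iff.mpr fun n hn => factorization_ordCompl_mem_coprimeIcc hp hn)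
          fun _ _ _ => mul_nonneg (hfnonneg _) (hfnonneg _)
    _ = (∑ e ∈ range N, f (p ^ e)) * ∑ m ∈ coprimeIcc N (insert p s), f m := by
        rw [sum_mul_sum, sum_product]

theorem sum_Icc_le_sum_coprimeIcc_mul_prod
    (hfmul : ∀ m n : ℕ, m.Coprime n → f (m * n) = f m * f n) (hfnonneg : ∀ n, 0 ≤ f n)
    (N : ℕ) (U : Finset ℕ) (hUprime : ∀ p ∈ U, p.Prime) :
    ∑ n ∈ Icc 1 N, f n ≤
      (∑ n ∈ coprimeIcc N U, f n) * ∏ p ∈ U, ∑ e ∈ range N, f (p ^ e) := by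
  induction U using Finset.induction_on with
  | empty => simp [coprimeIcc_empty]
  | @insert p s hps ih =>
    have hprod_nonneg : 0 ≤ ∏ q ∈ s, ∑ e ∈ range N, f (q ^ e) :=
      prod_nonneg fun _ _ => sum_nonneg fun _ _ => hfnonneg _
    calc ∑ n ∈ Icc 1 N, f n
        ≤ (∑ n ∈ coprimeIcc N s, f n) * ∏ q ∈ s, ∑ e ∈ range N, f (q ^ e) :=
          ih fun q hq => hUprime q (mem_insert_of_mem hq)
      _ ≤ ((∑ e ∈ range N, f (p ^ e)) * ∑ m ∈ coprimeIcc N (insert p s), f m) *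
            ∏ q ∈ s, ∑ e ∈ range N, f (q ^ e) :=
          mul_le_mul_of_nonneg_right (sum_coprimeIcc_le_mul_sum_coprimeIcc_insert hfmul hfnonneg
            (hUprime p (mem_insert_self p s)) N s) hprod_nonneg
      _ = (∑ n ∈ coprimeIcc N (insert p s), f n) *
            ∏ q ∈ insert p s, ∑ e ∈ range N, f (q ^ e) := by
          rw [prod_insert hps]; ring

end Sieve

open Finset in
theorem sum_coprime_ge_of_multiplicative_general (f : ℕ → ℝ) (U : Finset ℕ)
    (hfmul : ∀ m n : ℕ, Nat.Coprime m n → f (m * n) = f m * f n)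
    (hfnonneg : ∀ n, 0 ≤ f n)
    (hUprime : ∀ p ∈ U, p.Prime)
    (hsum : ∀ p ∈ U, Summable (fun e : ℕ => f (p ^ e))) :
    ∀ x : ℝ, 1 ≤ x →
      (∑ n ∈ (Finset.Icc 1 ⌊x⌋₊).filter (fun n => ∀ p ∈ U, Nat.Coprime n p), f n)
        ≥ (∑ n ∈ Finset.Icc 1 ⌊x⌋₊, f n) / ∏ p ∈ U, ∑' e : ℕ, f (p ^ e) := by
  intro x _
  set N := ⌊x⌋₊
  have hpartial_le : ∏ p ∈ U, ∑ e ∈ range N, f (p ^ e) ≤ ∏ p ∈ U, ∑' e : ℕ, f (p ^ e) :=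
    prod_le_prod (fun _ _ => sum_nonneg fun _ _ => hfnonneg _)
      fun p hp => (hsum p hp).sum_le_tsum _ fun _ _ => hfnonneg _
  refine div_le_of_le_mul₀ (prod_nonneg fun _ _ => tsum_nonneg fun _ => hfnonneg _)
    (sum_nonneg fun _ _ => hfnonneg _) ?_
  calc ∑ n ∈ Icc 1 N, f n
      ≤ (∑ n ∈ coprimeIcc N U, f n) * ∏ p ∈ U, ∑ e ∈ range N, f (p ^ e) :=
        sum_Icc_le_sum_coprimeIcc_mul_prod hfmul hfnonneg N U hUprime
    _ ≤ (∑ n ∈ coprimeIcc N U, f n) * ∏ p ∈ U, ∑' e : ℕ, f (p ^ e) :=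
        mul_le_mul_of_nonneg_left hpartial_le (sum_nonneg fun _ _ => hfnonneg _)

open Finset in
theorem sum_coprime_ge_of_multiplicative (f : ℕ → ℝ) (U : Finset ℕ)
    (hf1 : f 1 = 1)
    (hfmul : ∀ m n : ℕ, Nat.Coprime m n → f (m * n) = f m * f n)
    (hfnonneg : ∀ n, 0 ≤ f n)
    (hUprime : ∀ p ∈ U, p.Prime)
    (hsum : ∀ p ∈ U, Summable (fun e : ℕ => f (p ^ e))) :
    ∀ x : ℝ, 1 ≤ x →
      (∑ n ∈ (Finset.Icc 1 ⌊x⌋₊).filter (fun n => ∀ p ∈ U, Nat.Coprime n p), f n)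
        ≥ (∑ n ∈ Finset.Icc 1 ⌊x⌋₊, f n) / ∏ p ∈ U, ∑' e : ℕ, f (p ^ e) :=
  sum_coprime_ge_of_multiplicative_general f U hfmul hfnonneg hUprime hsum
end

section
/- Let N be a positive integer and a, b integers with gcd(b, N) = 1 such that ψ(N) = a·N + b, where ψ is the Dedekind psi function. Then N is squarefree and σ*(N) = ψ(N) = a·N + b. -/
/-- The Dedekind psi function: `ψ(N) = ∏_{p^e || N} p^(e-1) * (p + 1)`. -/
def dedekindPsi (N : ℕ) : ℕ :=
  ∏ p ∈ N.primeFactors, p ^ (N.factorization p - 1) * (p + 1)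

/-- The sum of unitary divisors: `σ*(N) = ∏_{p^e || N} (p^e + 1)`. -/
def unitarySigma (N : ℕ) : ℕ :=
  ∏ p ∈ N.primeFactors, (p ^ N.factorization p + 1)

theorem squarefree_of_psi_linear (N : ℕ) (hN : 0 < N) (a b : ℤ)
    (hb : Int.gcd b (N : ℤ) = 1) (h : (dedekindPsi N : ℤ) = a * N + b) :
    Squarefree N ∧ (unitarySigma N : ℤ) = (dedekindPsi N : ℤ) ∧
      (unitarySigma N : ℤ) = a * N + b := by
  have hsf : Squarefree N := by
    rw [Nat.squarefree_iff_prime_squarefree]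
    intro p hp hpp
    have hpN : p ∣ N := dvd_trans (dvd_mul_right p p) hpp
    have hmem : p ∈ N.primeFactors := Nat.mem_primeFactors.2 ⟨hp, hpN, hN.ne'⟩
    have he : 2 ≤ N.factorization p :=
      (Nat.Prime.pow_dvd_iff_le_factorization hp hN.ne').1 (by simpa [sq] using hpp)
    have hpψ : p ∣ dedekindPsi N := by
      refine dvd_trans ?_ (Finset.dvd_prod_of_mem _ hmem)
      exact dvd_mul_of_dvd_left (dvd_pow_self p (by omega)) _
    have hpb : (p : ℤ) ∣ b := by
      have : (p : ℤ) ∣ (dedekindPsi N : ℤ) := Int.natCast_dvd_natCast.2 hpψ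
      have h2 : (p : ℤ) ∣ a * N := Dvd.dvd.mul_left (Int.natCast_dvd_natCast.2 hpN) a
      have h3 : (p : ℤ) ∣ a * N + b := h ▸ this
      simpa using dvd_sub h3 h2
    have : (p : ℤ) ∣ Int.gcd b (N : ℤ) := by
      exact_mod_cast Int.dvd_gcd hpb (Int.natCast_dvd_natCast.2 hpN)
    rw [hb] at this
    have h1 : p ≤ 1 := Nat.le_of_dvd one_pos (by exact_mod_cast this)
    exact absurd h1 (by have := hp.two_le; omega)
  have heq : unitarySigma N = dedekindPsi N := by
    unfold unitarySigma dedekindPsi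
    refine Finset.prod_congr rfl fun p hp => ?_
    have h1 : N.factorization p = 1 :=
      (Nat.squarefree_iff_factorization_le_one hN.ne').1 hsf p |>.antisymm
        (Nat.Prime.factorization_pos_of_dvd (Nat.prime_of_mem_primeFactors hp) hN.ne'
          (Nat.dvd_of_mem_primeFactors hp))
    simp [h1]
  exact ⟨hsf, by rw [heq], by rw [heq]; exact h⟩
end
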